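/- arXiv:2602.11789 — 2 statements merged into one kernel-verified Lean document; each statement's English description precedes it below -/
import Mathlib

section
/- Let m ≥ 1 and L > 0. Let f_1,…,f_m : ℝ^d → ℝ be differentiable with ‖∇f_i(x) − ∇f_i(y)‖ ≤ mL‖x − y‖ for all i and all x, y, and set f = (1/m)·Σ_{i=1}^m f_i. Fix points x_1,…,x_m ∈ ℝ^d and let x̄ = (1/m)·Σ_{i=1}^m x_i. Let {g_{ij} : i ∈ {1,…,m}, j ∈ {1,…,B_i}} be mutually independent square-integrable random vectors in ℝ^d with E[g_{ij}] = ∇f_i(x_i) and E[‖g_{ij} − ∇f_i(x_i)‖²] ≤ σ_i², and let ȳ = (1/m)·Σ_{i=1}^m (1/B_i)·Σ_{j=1}^{B_i} g_{ij}. Then E[‖ȳ − ∇f(x̄)‖²] ≤ (2/m²)·Σ_{i=1}^m σ_i²/B_i + 2mL²·Σ_{i=1}^m ‖x_i − x̄‖². -/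
/-!
Split `ȳ - ∇f(x̄)` at `μ̄ = E ȳ = (1/m) ∑ ∇fᵢ(xᵢ)` using `‖a + b‖² ≤ 2‖a‖² + 2‖b‖²`.
The noise `ȳ - μ̄` is the sum of the independent centred terms `(1/(m Bᵢ)) (gᵢⱼ - ∇fᵢ(xᵢ))`,
which are orthogonal in `L²`, so its second moment is at most `∑ σᵢ² / (m² Bᵢ)`. The bias
`μ̄ - ∇f(x̄) = (1/m) ∑ (∇fᵢ(xᵢ) - ∇fᵢ(x̄))` is controlled by Jensen's inequality for averages and
the `mL`-Lipschitz gradients.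
-/

open MeasureTheory ProbabilityTheory
open scoped RealInnerProductSpace

lemma integral_norm_sub_sq_le {Ω E : Type*} [MeasurableSpace Ω] {P : Measure Ω}
    [IsProbabilityMeasure P] [NormedAddCommGroup E] {Y : Ω → E} (hY : MemLp Y 2 P)
    (a b : E) :
    ∫ ω, ‖Y ω - a‖ ^ 2 ∂P ≤ 2 * ∫ ω, ‖Y ω - b‖ ^ 2 ∂P + 2 * ‖b - a‖ ^ 2 := by
  have hint : Integrable (fun ω => ‖Y ω - b‖ ^ 2) P :=
    (hY.sub (memLp_const b)).norm.integrable_sq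
  have hpt : ∀ ω, ‖Y ω - a‖ ^ 2 ≤ 2 * ‖Y ω - b‖ ^ 2 + 2 * ‖b - a‖ ^ 2 := fun ω =>
    calc ‖Y ω - a‖ ^ 2 ≤ (‖Y ω - b‖ + ‖b - a‖) ^ 2 := by
          gcongr; exact norm_sub_le_norm_sub_add_norm_sub _ _ _
      _ ≤ 2 * ‖Y ω - b‖ ^ 2 + 2 * ‖b - a‖ ^ 2 := by
          linarith [add_sq_le (a := ‖Y ω - b‖) (b := ‖b - a‖)]
  calc ∫ ω, ‖Y ω - a‖ ^ 2 ∂P ≤ ∫ ω, (2 * ‖Y ω - b‖ ^ 2 + 2 * ‖b - a‖ ^ 2) ∂P :=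
        integral_mono_of_nonneg (.of_forall fun _ => by positivity)
          ((hint.const_mul 2).add (integrable_const _)) (.of_forall hpt)
    _ = 2 * ∫ ω, ‖Y ω - b‖ ^ 2 ∂P + 2 * ‖b - a‖ ^ 2 := by
        rw [integral_add (hint.const_mul 2) (integrable_const _), integral_const_mul]
        simp

section SecondMoments

variable {Ω E : Type*} [MeasurableSpace Ω] {P : Measure Ω}
  [NormedAddCommGroup E] [InnerProductSpace ℝ E]

lemma MeasureTheory.MemLp.integrable_inner {X Y : Ω → E} (hX : MemLp X 2 P) (hY : MemLp Y 2 P) :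
    Integrable (fun ω => ⟪X ω, Y ω⟫) P :=
  memLp_one_iff_integrable.1 <| (innerSL ℝ).memLp_of_bilin 1 hX hY

variable [CompleteSpace E] [MeasurableSpace E] [BorelSpace E]

lemma ProbabilityTheory.IndepFun.integral_inner {X Y : Ω → E} (hXY : IndepFun X Y P)
    (hX : Integrable X P) (hY : Integrable Y P) :
    ∫ ω, ⟪X ω, Y ω⟫ ∂P = ⟪∫ ω, X ω ∂P, ∫ ω, Y ω ∂P⟫ :=
  hXY.integral_bilin hX hY (innerSL ℝ)

lemma integral_norm_sum_sq_of_pairwise_indepFun [IsFiniteMeasure P] {ι : Type*} [Fintype ι]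
    {Z : ι → Ω → E} (hindep : Pairwise fun p q => IndepFun (Z p) (Z q) P)
    (hZ : ∀ p, MemLp (Z p) 2 P) (hmean : ∀ p, ∫ ω, Z p ω ∂P = 0) :
    ∫ ω, ‖∑ p, Z p ω‖ ^ 2 ∂P = ∑ p, ∫ ω, ‖Z p ω‖ ^ 2 ∂P := by
  have hint : ∀ p q, Integrable (fun ω => ⟪Z p ω, Z q ω⟫) P := fun p q =>
    (hZ p).integrable_inner (hZ q)
  have hcross : ∀ p q, p ≠ q → ∫ ω, ⟪Z p ω, Z q ω⟫ ∂P = 0 := fun p q hpq => by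
    rw [(hindep hpq).integral_inner ((hZ p).integrable one_le_two)
      ((hZ q).integrable one_le_two), hmean, inner_zero_left]
  calc ∫ ω, ‖∑ p, Z p ω‖ ^ 2 ∂P = ∫ ω, ∑ p, ∑ q, ⟪Z p ω, Z q ω⟫ ∂P := by
        simp_rw [← real_inner_self_eq_norm_sq, sum_inner, inner_sum]
    _ = ∑ p, ∑ q, ∫ ω, ⟪Z p ω, Z q ω⟫ ∂P := by
        rw [integral_finsetSum _ fun p _ => integrable_finsetSum _ fun q _ => hint p q]
        exact Finset.sum_congr rfl fun p _ => integral_finsetSum _ fun q _ => hint p q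
    _ = ∑ p, ∫ ω, ⟪Z p ω, Z p ω⟫ ∂P := Finset.sum_congr rfl fun p _ =>
        Finset.sum_eq_single p (fun q _ hqp => hcross p q hqp.symm) (by simp)
    _ = ∑ p, ∫ ω, ‖Z p ω‖ ^ 2 ∂P := by simp_rw [real_inner_self_eq_norm_sq]

end SecondMoments

section Averages

variable {E : Type*} [NormedAddCommGroup E] [NormedSpace ℝ E]

lemma smul_sum_sub_eq_sum_smul_sub {n : ℕ} (hn : n ≠ 0) (v : Fin n → E) (a : E) :
    (1 / (n : ℝ)) • ∑ j, v j - a = ∑ j, (1 / (n : ℝ)) • (v j - a) := by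
  rw [← Finset.smul_sum, Finset.sum_sub_distrib, Finset.sum_const, Finset.card_univ,
    Fintype.card_fin, ← Nat.cast_smul_eq_nsmul ℝ, smul_sub, smul_smul, one_div,
    inv_mul_cancel₀ (Nat.cast_ne_zero.2 hn), one_smul]

lemma norm_average_sq_le {n : ℕ} (v : Fin n → E) :
    ‖(1 / (n : ℝ)) • ∑ i, v i‖ ^ 2 ≤ 1 / n * ∑ i, ‖v i‖ ^ 2 := by
  have hnorm : ‖(1 / (n : ℝ)) • ∑ i, v i‖ ≤ 1 / n * ∑ i, ‖v i‖ := by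
    rw [norm_smul, Real.norm_of_nonneg (by positivity)]
    gcongr
    exact norm_sum_le _ _
  have hcs : (∑ i, ‖v i‖) ^ 2 ≤ n * ∑ i, ‖v i‖ ^ 2 := by
    simpa using sq_sum_le_card_mul_sum_sq (s := Finset.univ) (f := fun i => ‖v i‖)
  calc ‖(1 / (n : ℝ)) • ∑ i, v i‖ ^ 2 ≤ (1 / n * ∑ i, ‖v i‖) ^ 2 := by gcongr
    _ ≤ (1 / n) ^ 2 * (n * ∑ i, ‖v i‖ ^ 2) := by rw [mul_pow]; gcongr
    _ = 1 / n * ∑ i, ‖v i‖ ^ 2 := by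
        rcases eq_or_ne (n : ℝ) 0 with hn | hn
        · simp [hn]
        · field_simp

lemma norm_average_sub_average_sq_le {F : Type*} [NormedAddCommGroup F] {n : ℕ}
    {G : Fin n → F → E} {K : ℝ} (hG : ∀ i x y, ‖G i x - G i y‖ ≤ K * ‖x - y‖)
    (x : Fin n → F) (y : F) :
    ‖(1 / (n : ℝ)) • ∑ i, G i (x i) - (1 / (n : ℝ)) • ∑ i, G i y‖ ^ 2
      ≤ K ^ 2 / n * ∑ i, ‖x i - y‖ ^ 2 := by
  rw [← smul_sub, ← Finset.sum_sub_distrib]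
  calc _ ≤ 1 / n * ∑ i, ‖G i (x i) - G i y‖ ^ 2 := norm_average_sq_le _
    _ ≤ 1 / n * ∑ i, (K * ‖x i - y‖) ^ 2 := by
        gcongr with i
        exact hG i (x i) y
    _ = K ^ 2 / n * ∑ i, ‖x i - y‖ ^ 2 := by
        simp_rw [mul_pow, ← Finset.mul_sum]
        ring

end Averages

lemma gradient_const_mul_sum {F : Type*} [NormedAddCommGroup F] [InnerProductSpace ℝ F]
    [CompleteSpace F] {ι : Type*} [Fintype ι] {f : ι → F → ℝ} {y : F}
    (hf : ∀ i, DifferentiableAt ℝ (f i) y) (c : ℝ) :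
    gradient (fun z => c * ∑ i, f i z) y = c • ∑ i, gradient (f i) y := by
  refine HasGradientAt.gradient ?_
  rw [hasGradientAt_iff_hasFDerivAt, map_smul, map_sum]
  exact (HasFDerivAt.fun_sum fun i _ => (hf i).hasGradientAt.hasFDerivAt).const_mul c

lemma integral_norm_sum_batch_mean_sub_sq_le {Ω E : Type*} [MeasurableSpace Ω] {P : Measure Ω}
    [IsProbabilityMeasure P] [NormedAddCommGroup E] [InnerProductSpace ℝ E] [CompleteSpace E]
    [MeasurableSpace E] [BorelSpace E] {ι : Type*} [Fintype ι] {B : ι → ℕ} (hB : ∀ i, B i ≠ 0)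
    {g : (i : ι) → Fin (B i) → Ω → E} {μ : ι → E} {σ : ι → ℝ}
    (hL2 : ∀ i j, MemLp (g i j) 2 P)
    (hindep : iIndepFun (fun p : (Σ i, Fin (B i)) => g p.1 p.2) P)
    (hmean : ∀ i j, ∫ ω, g i j ω ∂P = μ i)
    (hvar : ∀ i j, ∫ ω, ‖g i j ω - μ i‖ ^ 2 ∂P ≤ σ i ^ 2) :
    ∫ ω, ‖∑ i, ((1 / (B i : ℝ)) • ∑ j, g i j ω - μ i)‖ ^ 2 ∂P ≤ ∑ i, σ i ^ 2 / B i := by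
  set Z : (Σ i, Fin (B i)) → Ω → E := fun p ω => (1 / (B p.1 : ℝ)) • (g p.1 p.2 ω - μ p.1)
  have hsum : ∀ ω, ∑ i, ((1 / (B i : ℝ)) • ∑ j, g i j ω - μ i) = ∑ p, Z p ω := fun ω => by
    rw [Fintype.sum_sigma]
    exact Finset.sum_congr rfl fun i _ => smul_sum_sub_eq_sum_smul_sub (hB i) _ _
  have hZ : ∀ p, MemLp (Z p) 2 P := fun p =>
    ((hL2 p.1 p.2).sub (memLp_const _)).const_smul _
  have hZmean : ∀ p, ∫ ω, Z p ω ∂P = 0 := fun p => by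
    simp [Z, integral_smul, integral_sub ((hL2 p.1 p.2).integrable one_le_two), hmean]
  have hZindep : Pairwise fun p q => IndepFun (Z p) (Z q) P := fun p q hpq =>
    (hindep.indepFun hpq).comp ((measurable_id.sub_const _).const_smul _)
      ((measurable_id.sub_const _).const_smul _)
  have hZvar : ∀ p, ∫ ω, ‖Z p ω‖ ^ 2 ∂P ≤ (1 / (B p.1 : ℝ)) ^ 2 * σ p.1 ^ 2 := fun p => by
    simp_rw [Z, norm_smul, mul_pow, Real.norm_of_nonneg (by positivity : (0 : ℝ) ≤ 1 / B p.1)]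
    rw [integral_const_mul]
    gcongr
    exact hvar p.1 p.2
  calc ∫ ω, ‖∑ i, ((1 / (B i : ℝ)) • ∑ j, g i j ω - μ i)‖ ^ 2 ∂P
      = ∑ p, ∫ ω, ‖Z p ω‖ ^ 2 ∂P := by
        simp_rw [hsum]
        exact integral_norm_sum_sq_of_pairwise_indepFun hZindep hZ hZmean
    _ ≤ ∑ p : (Σ i, Fin (B i)), (1 / (B p.1 : ℝ)) ^ 2 * σ p.1 ^ 2 :=
        Finset.sum_le_sum fun p _ => hZvar p
    _ = ∑ i, σ i ^ 2 / B i := by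
        rw [Fintype.sum_sigma]
        refine Finset.sum_congr rfl fun i _ => ?_
        have : (B i : ℝ) ≠ 0 := Nat.cast_ne_zero.2 (hB i)
        simp only [Finset.sum_const, Finset.card_univ, Fintype.card_fin, nsmul_eq_mul]
        field_simp

theorem stmt7_general
    {Ω : Type*} [MeasurableSpace Ω] (P : Measure Ω) [IsProbabilityMeasure P]
    (d m : ℕ) (L : ℝ)
    (f : Fin m → EuclideanSpace ℝ (Fin d) → ℝ)
    (hdiff : ∀ i, Differentiable ℝ (f i))
    (hLip : ∀ i x y, ‖gradient (f i) x - gradient (f i) y‖ ≤ (m : ℝ) * L * ‖x - y‖)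
    (x : Fin m → EuclideanSpace ℝ (Fin d))
    (B : Fin m → ℕ) (hB : ∀ i, 1 ≤ B i)
    (g : (i : Fin m) → Fin (B i) → Ω → EuclideanSpace ℝ (Fin d))
    (σ : Fin m → ℝ)
    (hL2 : ∀ i j, MemLp (g i j) 2 P)
    (hindep : ProbabilityTheory.iIndepFun
      (fun p : (Σ i : Fin m, Fin (B i)) => g p.1 p.2) P)
    (hmean : ∀ i j, ∫ ω, g i j ω ∂P = gradient (f i) (x i))
    (hvar : ∀ i j, ∫ ω, ‖g i j ω - gradient (f i) (x i)‖ ^ 2 ∂P ≤ (σ i) ^ 2) :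
    ∫ ω, ‖(1 / (m : ℝ)) • ∑ i, (1 / (B i : ℝ)) • ∑ j, g i j ω
        - gradient (fun z => (1 / (m : ℝ)) * ∑ i, f i z)
            ((1 / (m : ℝ)) • ∑ i, x i)‖ ^ 2 ∂P
      ≤ (2 / (m : ℝ) ^ 2) * ∑ i, (σ i) ^ 2 / (B i : ℝ)
        + 2 * (m : ℝ) * L ^ 2 * ∑ i, ‖x i - (1 / (m : ℝ)) • ∑ k, x k‖ ^ 2 := by
  set xbar := (1 / (m : ℝ)) • ∑ k, x k
  set μ := (1 / (m : ℝ)) • ∑ i, gradient (f i) (x i)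
  have hnoise : ∫ ω, ‖(1 / (m : ℝ)) • ∑ i, (1 / (B i : ℝ)) • ∑ j, g i j ω - μ‖ ^ 2 ∂P
      ≤ 1 / (m : ℝ) ^ 2 * ∑ i, σ i ^ 2 / B i := by
    simp_rw [μ, ← smul_sub, ← Finset.sum_sub_distrib, norm_smul, mul_pow, integral_const_mul,
      Real.norm_of_nonneg (by positivity : (0 : ℝ) ≤ 1 / m), one_div_pow]
    gcongr
    exact integral_norm_sum_batch_mean_sub_sq_le (fun i => Nat.one_le_iff_ne_zero.1 (hB i))
      hL2 hindep hmean hvar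
  have hbias : ‖μ - gradient (fun z => (1 / (m : ℝ)) * ∑ i, f i z) xbar‖ ^ 2
      ≤ m * L ^ 2 * ∑ i, ‖x i - xbar‖ ^ 2 := by
    rw [gradient_const_mul_sum (fun i => (hdiff i).differentiableAt)]
    refine (norm_average_sub_average_sq_le hLip x xbar).trans_eq ?_
    rcases eq_or_ne (m : ℝ) 0 with hm | hm
    · simp [hm]
    · field_simp
  have hmemLp : MemLp (fun ω => (1 / (m : ℝ)) • ∑ i, (1 / (B i : ℝ)) • ∑ j, g i j ω) 2 P :=
    ((memLp_finsetSum _ fun i _ =>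
      (memLp_finsetSum _ fun j _ => hL2 i j).const_smul (1 / (B i : ℝ))).const_smul (1 / (m : ℝ)) :)
  calc _ ≤ 2 * ∫ ω, ‖(1 / (m : ℝ)) • ∑ i, (1 / (B i : ℝ)) • ∑ j, g i j ω - μ‖ ^ 2 ∂P
        + 2 * ‖μ - gradient (fun z => (1 / (m : ℝ)) * ∑ i, f i z) xbar‖ ^ 2 :=
        integral_norm_sub_sq_le hmemLp _ μ
    _ ≤ 2 * (1 / (m : ℝ) ^ 2 * ∑ i, σ i ^ 2 / B i)
        + 2 * (m * L ^ 2 * ∑ i, ‖x i - xbar‖ ^ 2) := by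
        gcongr
    _ = _ := by ring

/-- Gradient estimation error bound (equation (2.5) of the paper): the averaged
node-specific mini-batch estimator `ȳ` deviates from `∇f(x̄)` by at most
`(2/m²) ∑ σ_i²/B_i + 2mL² ∑ ‖x_i − x̄‖²` in mean square. -/
theorem stmt7
    {Ω : Type*} [MeasurableSpace Ω] (P : Measure Ω) [IsProbabilityMeasure P]
    (d m : ℕ) (hm : 1 ≤ m) (L : ℝ)
    (f : Fin m → EuclideanSpace ℝ (Fin d) → ℝ)
    (hdiff : ∀ i, Differentiable ℝ (f i))
    (hLip : ∀ i x y, ‖gradient (f i) x - gradient (f i) y‖ ≤ (m : ℝ) * L * ‖x - y‖)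
    (x : Fin m → EuclideanSpace ℝ (Fin d))
    (B : Fin m → ℕ) (hB : ∀ i, 1 ≤ B i)
    (g : (i : Fin m) → Fin (B i) → Ω → EuclideanSpace ℝ (Fin d))
    (σ : Fin m → ℝ)
    (hmeas : ∀ i j, Measurable (g i j))
    (hL2 : ∀ i j, MemLp (g i j) 2 P)
    (hindep : ProbabilityTheory.iIndepFun
      (fun p : (Σ i : Fin m, Fin (B i)) => g p.1 p.2) P)
    (hmean : ∀ i j, ∫ ω, g i j ω ∂P = gradient (f i) (x i))
    (hvar : ∀ i j, ∫ ω, ‖g i j ω - gradient (f i) (x i)‖ ^ 2 ∂P ≤ (σ i) ^ 2) :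
    ∫ ω, ‖(1 / (m : ℝ)) • ∑ i, (1 / (B i : ℝ)) • ∑ j, g i j ω
        - gradient (fun z => (1 / (m : ℝ)) * ∑ i, f i z)
            ((1 / (m : ℝ)) • ∑ i, x i)‖ ^ 2 ∂P
      ≤ (2 / (m : ℝ) ^ 2) * ∑ i, (σ i) ^ 2 / (B i : ℝ)
        + 2 * (m : ℝ) * L ^ 2 * ∑ i, ‖x i - (1 / (m : ℝ)) • ∑ k, x k‖ ^ 2 :=
  stmt7_general P d m L f hdiff hLip x B hB g σ hL2 hindep hmean hvar
end

section
/- Let m ≥ 1, L̄ > 0, and η > 0. Let f_1,…,f_m : ℝ^d → ℝ be differentiable with ‖∇f_i(x) − ∇f_i(y)‖ ≤ √m·L̄·‖x − y‖ for all i and all x, y, and assume f = (1/m)·Σ_{i=1}^m f_i satisfies ‖∇f(x) − ∇f(y)‖ ≤ L̄‖x − y‖ for all x, y. Fix x_1,…,x_m ∈ ℝ^d, y_1,…,y_m ∈ ℝ^d, and s_1,…,s_m ∈ ℝ^d with (1/m)·Σ_i s_i = (1/m)·Σ_i y_i. Let x̄ = (1/m)·Σ_i x_i, s̄ = (1/m)·Σ_i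 s_i, and x̄⁺ = x̄ − η·s̄. Define U = ‖(1/m)·Σ_{i=1}^m (y_i − ∇f_i(x_i))‖² and C = Σ_{i=1}^m ‖x_i − x̄‖² + η²·Σ_{i=1}^m ‖s_i − s̄‖². Then f(x̄⁺) ≤ f(x̄) − (η/2)‖∇f(x̄)‖² − (1/(2η) − L̄/2)‖x̄⁺ − x̄‖² + η·U + L̄²·η·C. -/
/-!
By gradient tracking the averaged iterate takes an inexact gradient step `x̄⁺ = x̄ - η s̄` on the
`L̄`-smooth `f`. The descent lemma `f b ≤ f a + ⟪∇f a, b - a⟫ + L̄/2 ‖b - a‖²` together with the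
polarization of `⟪∇f x̄, s̄⟫` bounds `f x̄⁺` by the claimed right-hand side with `η/2 ‖∇f x̄ - s̄‖²`
in place of `ηU + L̄²ηC`. Since `s̄ = ȳ`, the vector `∇f x̄ - s̄` is the average of the
`∇fᵢ x̄ - ∇fᵢ xᵢ` minus the estimation error; by Jensen and the `√m L̄`-Lipschitz bound the square
of the first average is at most `L̄² ∑ ‖xᵢ - x̄‖²`, and the `s`-part of `C` is slack.
-/

open RealInnerProductSpace Finset

section Descent

variable {E : Type*} [NormedAddCommGroup E] [InnerProductSpace ℝ E] [CompleteSpace E]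
  {g : E → ℝ} {L : ℝ}

/-- Proved without integration: along the segment from `a` to `b`, the gap between `g` and its
quadratic upper model has nonpositive derivative. -/
theorem le_add_inner_gradient_add_sq_of_lipschitz_gradient (hg : Differentiable ℝ g)
    (hLip : ∀ u v, ‖gradient g u - gradient g v‖ ≤ L * ‖u - v‖) (a b : E) :
    g b ≤ g a + ⟪gradient g a, b - a⟫ + L / 2 * ‖b - a‖ ^ 2 := by
  set v := b - a
  set φ : ℝ → ℝ := fun t => g (a + t • v) - t * ⟪gradient g a, v⟫ - L / 2 * ‖v‖ ^ 2 * t ^ 2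
  set φ' : ℝ → ℝ := fun t => ⟪gradient g (a + t • v) - gradient g a, v⟫ - L * t * ‖v‖ ^ 2
  have hφ : ∀ t, HasDerivAt φ (φ' t) t := by
    intro t
    have hline : HasDerivAt (fun t : ℝ => a + t • v) v t := by
      simpa using ((hasDerivAt_id t).smul_const v).const_add a
    have hcomp := (hg (a + t • v)).hasGradientAt.hasFDerivAt.comp_hasDerivAt t hline
    have h := (hcomp.sub ((hasDerivAt_id t).mul_const ⟪gradient g a, v⟫)).sub
      ((hasDerivAt_pow 2 t).const_mul (L / 2 * ‖v‖ ^ 2))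
    refine h.congr_deriv ?_
    rw [InnerProductSpace.toDual_apply_apply]
    simp only [φ', inner_sub_left]
    push_cast
    ring
  have hφ'_nonpos : ∀ t, 0 ≤ t → φ' t ≤ 0 := by
    intro t ht
    have := calc ⟪gradient g (a + t • v) - gradient g a, v⟫
        ≤ ‖gradient g (a + t • v) - gradient g a‖ * ‖v‖ := real_inner_le_norm _ _
      _ ≤ L * ‖(a + t • v) - a‖ * ‖v‖ := by gcongr; exact hLip _ _
      _ = L * t * ‖v‖ ^ 2 := by
        rw [add_sub_cancel_left, norm_smul, Real.norm_of_nonneg ht]; ring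
    linarith
  have hanti : AntitoneOn φ (Set.Ici 0) :=
    antitoneOn_of_hasDerivWithinAt_nonpos (convex_Ici 0)
      (fun t _ => (hφ t).continuousAt.continuousWithinAt)
      (fun t _ => (hφ t).hasDerivWithinAt)
      (fun t ht => hφ'_nonpos t (le_of_lt (by simpa using ht)))
  have h10 : φ 1 ≤ φ 0 :=
    hanti (Set.mem_Ici.2 le_rfl) (Set.mem_Ici.2 zero_le_one) zero_le_one
  simp only [φ, one_smul, zero_smul, add_zero, v, add_sub_cancel] at h10
  linarith

theorem apply_sub_smul_le_of_lipschitz_gradient (hg : Differentiable ℝ g)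
    (hLip : ∀ u v, ‖gradient g u - gradient g v‖ ≤ L * ‖u - v‖) (a s : E) (η : ℝ) :
    g (a - η • s) ≤ g a - η / 2 * ‖gradient g a‖ ^ 2
      - (1 / (2 * η) - L / 2) * ‖(a - η • s) - a‖ ^ 2 + η / 2 * ‖gradient g a - s‖ ^ 2 := by
  have hdesc := le_add_inner_gradient_add_sq_of_lipschitz_gradient hg hLip a (a - η • s)
  have hstep : (a - η • s) - a = -(η • s) := by abel
  have hsq : ‖(a - η • s) - a‖ ^ 2 = η ^ 2 * ‖s‖ ^ 2 := by
    rw [hstep, norm_neg, norm_smul, mul_pow, Real.norm_eq_abs, sq_abs]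
  rw [hsq, hstep, inner_neg_right, real_inner_smul_right] at hdesc
  rw [hsq]
  have hpolar := norm_sub_sq_real (gradient g a) s
  -- `(1 / (2η)) η² = η / 2` also when `η = 0`, thanks to `1 / 0 = 0`
  have hscale : 1 / (2 * η) * η ^ 2 = η / 2 := by
    rcases eq_or_ne η 0 with rfl | hη
    · simp
    · field_simp
  linear_combination hdesc - η / 2 * hpolar + ‖s‖ ^ 2 * hscale

end Descent

theorem hasGradientAt_const_mul_sum {E ι : Type*} [NormedAddCommGroup E] [InnerProductSpace ℝ E]
    [CompleteSpace E] [Fintype ι] {f : ι → E → ℝ} {z : E} (hf : ∀ i, DifferentiableAt ℝ (f i) z)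
    (c : ℝ) : HasGradientAt (fun z => c * ∑ i, f i z) (c • ∑ i, gradient (f i) z) z := by
  rw [hasGradientAt_iff_hasFDerivAt, map_smul, map_sum]
  exact (HasFDerivAt.fun_sum fun i _ => (hf i).hasGradientAt.hasFDerivAt).const_mul c

theorem sq_norm_average_le {ι F : Type*} [Fintype ι] [SeminormedAddCommGroup F] [NormedSpace ℝ F]
    (v : ι → F) :
    ‖(1 / (Fintype.card ι : ℝ)) • ∑ i, v i‖ ^ 2 ≤ 1 / (Fintype.card ι : ℝ) * ∑ i, ‖v i‖ ^ 2 := by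
  rcases isEmpty_or_nonempty ι with hι | hι
  · simp
  have hcard : (0 : ℝ) < Fintype.card ι := by exact_mod_cast Fintype.card_pos
  have hcs : (∑ i, ‖v i‖) ^ 2 ≤ Fintype.card ι * ∑ i, ‖v i‖ ^ 2 := by
    simpa using sq_sum_le_card_mul_sum_sq (s := univ) (f := fun i => ‖v i‖)
  calc ‖(1 / (Fintype.card ι : ℝ)) • ∑ i, v i‖ ^ 2
      = (1 / (Fintype.card ι : ℝ)) ^ 2 * ‖∑ i, v i‖ ^ 2 := by
        rw [norm_smul, mul_pow, Real.norm_eq_abs, sq_abs]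
    _ ≤ (1 / (Fintype.card ι : ℝ)) ^ 2 * (Fintype.card ι * ∑ i, ‖v i‖ ^ 2) := by
        gcongr
        exact (pow_le_pow_left₀ (norm_nonneg _) (norm_sum_le _ _) 2).trans hcs
    _ = 1 / (Fintype.card ι : ℝ) * ∑ i, ‖v i‖ ^ 2 := by field_simp

theorem sq_norm_average_sub_le_of_lipschitz {ι E F : Type*} [Fintype ι] [SeminormedAddCommGroup E]
    [SeminormedAddCommGroup F] [NormedSpace ℝ F] {G : ι → E → F} {K : ℝ}
    (hG : ∀ i u v, ‖G i u - G i v‖ ≤ Real.sqrt (Fintype.card ι) * K * ‖u - v‖) (a : E) (x : ι → E) :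
    ‖(1 / (Fintype.card ι : ℝ)) • ∑ i, (G i a - G i (x i))‖ ^ 2 ≤ K ^ 2 * ∑ i, ‖x i - a‖ ^ 2 := by
  refine (sq_norm_average_le _).trans ?_
  rw [mul_sum, mul_sum]
  refine sum_le_sum fun i _ => ?_
  have hcard : (Fintype.card ι : ℝ) ≠ 0 := by
    have : Nonempty ι := ⟨i⟩
    exact_mod_cast Fintype.card_ne_zero
  calc 1 / (Fintype.card ι : ℝ) * ‖G i a - G i (x i)‖ ^ 2
      ≤ 1 / (Fintype.card ι : ℝ) * (Real.sqrt (Fintype.card ι) * K * ‖a - x i‖) ^ 2 := by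
        gcongr
        exact hG i a (x i)
    _ = K ^ 2 * ‖x i - a‖ ^ 2 := by
        rw [mul_pow, mul_pow, Real.sq_sqrt (Nat.cast_nonneg _), norm_sub_rev]
        field_simp

theorem sq_norm_gradient_average_sub_le {ι E : Type*} [Fintype ι] [NormedAddCommGroup E]
    [InnerProductSpace ℝ E] [CompleteSpace E] {f : ι → E → ℝ} {K : ℝ}
    (hf : ∀ i, Differentiable ℝ (f i))
    (hLip : ∀ i u v, ‖gradient (f i) u - gradient (f i) v‖
      ≤ Real.sqrt (Fintype.card ι) * K * ‖u - v‖)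
    (a : E) (x y s : ι → E)
    (htrack : (1 / (Fintype.card ι : ℝ)) • ∑ i, s i = (1 / (Fintype.card ι : ℝ)) • ∑ i, y i) :
    ‖gradient (fun z => 1 / (Fintype.card ι : ℝ) * ∑ i, f i z) a
        - (1 / (Fintype.card ι : ℝ)) • ∑ i, s i‖ ^ 2
      ≤ 2 * (K ^ 2 * ∑ i, ‖x i - a‖ ^ 2)
        + 2 * ‖(1 / (Fintype.card ι : ℝ)) • ∑ i, (y i - gradient (f i) (x i))‖ ^ 2 := by
  have hA := sq_norm_average_sub_le_of_lipschitz hLip a x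
  set c := 1 / (Fintype.card ι : ℝ)
  rw [(hasGradientAt_const_mul_sum (fun i => hf i a) c).gradient, htrack]
  have hsplit : c • ∑ i, gradient (f i) a - c • ∑ i, y i
      = c • ∑ i, (gradient (f i) a - gradient (f i) (x i))
        - c • ∑ i, (y i - gradient (f i) (x i)) := by
    simp only [sum_sub_distrib, smul_sub]
    abel
  rw [hsplit]
  calc _ ≤ (‖c • ∑ i, (gradient (f i) a - gradient (f i) (x i))‖
          + ‖c • ∑ i, (y i - gradient (f i) (x i))‖) ^ 2 := by
        gcongr
        exact norm_sub_le _ _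
    _ ≤ 2 * (‖c • ∑ i, (gradient (f i) a - gradient (f i) (x i))‖ ^ 2
          + ‖c • ∑ i, (y i - gradient (f i) (x i))‖ ^ 2) := add_sq_le
    _ ≤ _ := by linarith

theorem stmt9_general (d m : ℕ) (Lbar η : ℝ) (hη : 0 < η)
    (f : Fin m → EuclideanSpace ℝ (Fin d) → ℝ)
    (hdiff : ∀ i, Differentiable ℝ (f i))
    (hLip : ∀ i x y, ‖gradient (f i) x - gradient (f i) y‖
        ≤ Real.sqrt m * Lbar * ‖x - y‖)
    (hLipf : ∀ x y, ‖gradient (fun z => (1 / (m : ℝ)) * ∑ i, f i z) x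
          - gradient (fun z => (1 / (m : ℝ)) * ∑ i, f i z) y‖ ≤ Lbar * ‖x - y‖)
    (x y s : Fin m → EuclideanSpace ℝ (Fin d))
    (htrack : (1 / (m : ℝ)) • ∑ i, s i = (1 / (m : ℝ)) • ∑ i, y i) :
    (fun z => (1 / (m : ℝ)) * ∑ i, f i z)
        ((1 / (m : ℝ)) • ∑ i, x i - η • ((1 / (m : ℝ)) • ∑ i, s i))
      ≤ (fun z => (1 / (m : ℝ)) * ∑ i, f i z) ((1 / (m : ℝ)) • ∑ i, x i)
        - (η / 2) * ‖gradient (fun z => (1 / (m : ℝ)) * ∑ i, f i z)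
            ((1 / (m : ℝ)) • ∑ i, x i)‖ ^ 2
        - (1 / (2 * η) - Lbar / 2)
            * ‖((1 / (m : ℝ)) • ∑ i, x i - η • ((1 / (m : ℝ)) • ∑ i, s i))
                - (1 / (m : ℝ)) • ∑ i, x i‖ ^ 2
        + η * ‖(1 / (m : ℝ)) • ∑ i, (y i - gradient (f i) (x i))‖ ^ 2
        + Lbar ^ 2 * η * (∑ i, ‖x i - (1 / (m : ℝ)) • ∑ k, x k‖ ^ 2
            + η ^ 2 * ∑ i, ‖s i - (1 / (m : ℝ)) • ∑ k, s k‖ ^ 2) := by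
  have hF : Differentiable ℝ fun z => (1 / (m : ℝ)) * ∑ i, f i z :=
    (Differentiable.fun_sum fun i _ => hdiff i).const_mul _
  have hstep := apply_sub_smul_le_of_lipschitz_gradient hF hLipf
    ((1 / (m : ℝ)) • ∑ i, x i) ((1 / (m : ℝ)) • ∑ i, s i) η
  have herr := sq_norm_gradient_average_sub_le hdiff
    (by simpa only [Fintype.card_fin] using hLip) ((1 / (m : ℝ)) • ∑ i, x i) x y s
    (by simpa only [Fintype.card_fin] using htrack)
  simp only [Fintype.card_fin] at herr
  have hs : 0 ≤ Lbar ^ 2 * η * (η ^ 2 * ∑ i, ‖s i - (1 / (m : ℝ)) • ∑ k, s k‖ ^ 2) := by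
    positivity
  have := mul_le_mul_of_nonneg_left herr (by positivity : (0 : ℝ) ≤ η / 2)
  linarith

/-- Descent Lemma for the decentralized variance-reduced algorithm (Lemma E.1 of the
paper): with `U` the global gradient estimation error and `C` the consensus error,
`f(x̄⁺) ≤ f(x̄) − (η/2)‖∇f(x̄)‖² − (1/(2η) − L̄/2)‖x̄⁺ − x̄‖² + ηU + L̄²ηC`. -/
theorem stmt9 (d m : ℕ) (hm : 1 ≤ m) (Lbar η : ℝ) (hLbar : 0 < Lbar) (hη : 0 < η)
    (f : Fin m → EuclideanSpace ℝ (Fin d) → ℝ)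
    (hdiff : ∀ i, Differentiable ℝ (f i))
    (hLip : ∀ i x y, ‖gradient (f i) x - gradient (f i) y‖
        ≤ Real.sqrt m * Lbar * ‖x - y‖)
    (hLipf : ∀ x y, ‖gradient (fun z => (1 / (m : ℝ)) * ∑ i, f i z) x
          - gradient (fun z => (1 / (m : ℝ)) * ∑ i, f i z) y‖ ≤ Lbar * ‖x - y‖)
    (x y s : Fin m → EuclideanSpace ℝ (Fin d))
    (htrack : (1 / (m : ℝ)) • ∑ i, s i = (1 / (m : ℝ)) • ∑ i, y i) :
    (fun z => (1 / (m : ℝ)) * ∑ i, f i z)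
        ((1 / (m : ℝ)) • ∑ i, x i - η • ((1 / (m : ℝ)) • ∑ i, s i))
      ≤ (fun z => (1 / (m : ℝ)) * ∑ i, f i z) ((1 / (m : ℝ)) • ∑ i, x i)
        - (η / 2) * ‖gradient (fun z => (1 / (m : ℝ)) * ∑ i, f i z)
            ((1 / (m : ℝ)) • ∑ i, x i)‖ ^ 2
        - (1 / (2 * η) - Lbar / 2)
            * ‖((1 / (m : ℝ)) • ∑ i, x i - η • ((1 / (m : ℝ)) • ∑ i, s i))
                - (1 / (m : ℝ)) • ∑ i, x i‖ ^ 2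
        + η * ‖(1 / (m : ℝ)) • ∑ i, (y i - gradient (f i) (x i))‖ ^ 2
        + Lbar ^ 2 * η * (∑ i, ‖x i - (1 / (m : ℝ)) • ∑ k, x k‖ ^ 2
            + η ^ 2 * ∑ i, ‖s i - (1 / (m : ℝ)) • ∑ k, s k‖ ^ 2) :=
  stmt9_general d m Lbar η hη f hdiff hLip hLipf x y s htrack
end
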